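/- arXiv:2508.05809 — 7 statements merged into one kernel-verified Lean document; each statement's English description precedes it below -/
import Mathlib

section
/- Let L be an atomic 0-distributive lattice with least element 0 having at least three distinct atoms. Then the complement G^c(L) of the zero-divisor graph of L admits a finite resolving set (equivalently, the metric dimension dim_M(G^c(L)) is finite) if and only if the vertex set Z*(L) is finite (i.e. G^c(L) is a finite graph). -/
/-- The set of nonzero zero-divisors of a lattice `L` with least element `⊥`. -/
def ZStar (L : Type*) [Lattice L] [OrderBot L] : Type _ :=
  {a : L // a ≠ ⊥ ∧ ∃ b : L, b ≠ ⊥ ∧ a ⊓ b = ⊥}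

/-- The complement of the zero-divisor graph of a lattice `L`: vertices are the
nonzero zero-divisors, and distinct vertices are adjacent iff their meet is nonzero. -/
def GcL (L : Type*) [Lattice L] [OrderBot L] : SimpleGraph (ZStar L) where
  Adj x y := x ≠ y ∧ (x.1 ⊓ y.1 ≠ ⊥)
  symm := ⟨fun x y h => ⟨h.1.symm, by rw [inf_comm]; exact h.2⟩⟩
  loopless := ⟨fun x h => h.1 rfl⟩

/-- A set `S` of vertices is a resolving set for `G` if the distances to members of `S`
determine each vertex uniquely. -/
def IsResolvingSet {V : Type*} (G : SimpleGraph V) (S : Set V) : Prop :=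
  ∀ u v : V, (∀ s ∈ S, G.dist u s = G.dist v s) → u = v

/-! Every vertex of `G^c(L)` lies above an atom, and for atoms `p, q` the join `p ⊔ q` is again a
vertex, since by 0-distributivity it meets a third atom `r` trivially. As comparable vertices are
equal or adjacent, `u, p, p ⊔ q, q, v` is a walk of length at most 4 between any two vertices.
With the diameter bounded, distance vectors to a finite set take finitely many values, so a
finite resolving set forces finitely many vertices; conversely, in a connected graph the whole
vertex set resolves. -/

theorem exists_ne_ne_of_three {α : Type*} {P : α → Prop}
    (h : ∃ a b c, P a ∧ P b ∧ P c ∧ a ≠ b ∧ a ≠ c ∧ b ≠ c) (x y : α) :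
    ∃ r, P r ∧ r ≠ x ∧ r ≠ y := by
  obtain ⟨a, b, c, ha, hb, hc, hab, hac, hbc⟩ := h
  by_cases ha' : a ≠ x ∧ a ≠ y
  · exact ⟨a, ha, ha'⟩
  by_cases hb' : b ≠ x ∧ b ≠ y
  · exact ⟨b, hb, hb'⟩
  exact ⟨c, hc, by grind⟩

section Graph

variable {V : Type*} {G : SimpleGraph V}

theorem isResolvingSet_univ_of_preconnected (hG : G.Preconnected) : IsResolvingSet G Set.univ :=
  fun u v h => (hG u v).dist_eq_zero_iff.1 <| by simpa using h v (Set.mem_univ v)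

theorem IsResolvingSet.finite_of_edist_le {n : ℕ} (hdiam : ∀ u v, G.edist u v ≤ n)
    {S : Set V} (hS : S.Finite) (hres : IsResolvingSet G S) : Finite V := by
  have := hS.to_subtype
  let distances : V → S → Fin (n + 1) := fun v s =>
    ⟨G.dist v s, Nat.lt_succ_of_le (ENat.toNat_le_of_le_natCast (hdiam v s))⟩
  refine Finite.of_injective distances fun u v huv => hres u v fun s hs => ?_
  simpa [distances] using congrFun huv ⟨s, hs⟩

end Graph

namespace GcL

variable {L : Type*} [Lattice L] [OrderBot L]

theorem edist_le_one_of_le {x y : ZStar L} (h : y.1 ≤ x.1) : (GcL L).edist x y ≤ 1 := by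
  by_cases hxy : x = y
  · simp [hxy]
  · have hadj : (GcL L).Adj x y := ⟨hxy, by rw [inf_eq_right.2 h]; exact y.2.1⟩
    exact (SimpleGraph.edist_eq_one_iff_adj.2 hadj).le

theorem edist_le_four [IsAtomic L]
    (h0dist : ∀ a b c : L, a ⊓ b = ⊥ → a ⊓ c = ⊥ → a ⊓ (b ⊔ c) = ⊥)
    (hthird : ∀ p q : L, ∃ r, IsAtom r ∧ r ≠ p ∧ r ≠ q) (u v : ZStar L) :
    (GcL L).edist u v ≤ 4 := by
  obtain ⟨p, hp, hpu⟩ := (eq_bot_or_exists_atom_le u.1).resolve_left u.2.1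
  obtain ⟨q, hq, hqv⟩ := (eq_bot_or_exists_atom_le v.1).resolve_left v.2.1
  obtain ⟨r, hr, hrp, hrq⟩ := hthird p q
  have hrp' : r ⊓ p = ⊥ := (hr.disjoint_of_ne hp hrp).eq_bot
  have hrq' : r ⊓ q = ⊥ := (hr.disjoint_of_ne hq hrq).eq_bot
  let P : ZStar L := ⟨p, hp.1, r, hr.1, by rw [inf_comm, hrp']⟩
  let Q : ZStar L := ⟨q, hq.1, r, hr.1, by rw [inf_comm, hrq']⟩
  let M : ZStar L := ⟨p ⊔ q, fun h => hp.1 (le_bot_iff.1 (h ▸ le_sup_left)), r, hr.1,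
    by rw [inf_comm, h0dist r p q hrp' hrq']⟩
  calc (GcL L).edist u v
      ≤ (GcL L).edist u P + (GcL L).edist P M + (GcL L).edist M Q + (GcL L).edist Q v := by
        grw [← SimpleGraph.edist_triangle, ← SimpleGraph.edist_triangle,
          ← SimpleGraph.edist_triangle]
    _ ≤ 1 + 1 + 1 + 1 := by
        rw [SimpleGraph.edist_comm (u := P), SimpleGraph.edist_comm (u := Q)]
        gcongr <;> exact edist_le_one_of_le (by simp [P, Q, M, hpu, hqv])
    _ = 4 := by norm_num

end GcL

/-- for an atomic 0-distributive lattice with at least three atoms,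
the complement of the zero-divisor graph has a finite resolving set iff it is a
finite graph. -/
theorem gc_finite_resolving_iff_finite
    (L : Type*) [Lattice L] [OrderBot L] [IsAtomic L]
    (h0dist : ∀ a b c : L, a ⊓ b = ⊥ → a ⊓ c = ⊥ → a ⊓ (b ⊔ c) = ⊥)
    (hatoms : ∃ a b c : L, IsAtom a ∧ IsAtom b ∧ IsAtom c ∧ a ≠ b ∧ a ≠ c ∧ b ≠ c) :
    (∃ S : Set (ZStar L), S.Finite ∧ IsResolvingSet (GcL L) S) ↔ Finite (ZStar L) := by
  have hdiam : ∀ u v, (GcL L).edist u v ≤ (4 : ℕ) :=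
    GcL.edist_le_four h0dist (exists_ne_ne_of_three hatoms)
  have hconn : (GcL L).Preconnected := fun u v =>
    SimpleGraph.reachable_of_edist_ne_top (ne_top_of_le_ne_top (by simp) (hdiam u v))
  constructor
  · rintro ⟨S, hS, hres⟩
    exact hres.finite_of_edist_le hdiam hS
  · exact fun _ => ⟨Set.univ, Set.finite_univ, isResolvingSet_univ_of_preconnected hconn⟩
end

section
/- Let L be an atomic 0-distributive lattice with least element 0 having at least three distinct atoms. Then the complement G^c(L) of the zero-divisor graph of L admits a finite strong resolving set (equivalently, the strong metric dimension sdim_M(G^c(L)) is finite) if and only if the vertex set Z*(L) is finite (i.e. G^c(L) is a finite graph). -/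
/-- `w` strongly resolves `u` and `v` in `G`. -/
def StronglyResolves {V : Type*} (G : SimpleGraph V) (w u v : V) : Prop :=
  G.dist u w = G.dist u v + G.dist v w ∨ G.dist v w = G.dist v u + G.dist u w

/-- A strong resolving set for `G`. -/
def IsStrongResolvingSet {V : Type*} (G : SimpleGraph V) (W : Set V) : Prop :=
  ∀ u v : V, u ≠ v → ∃ w ∈ W, StronglyResolves G w u v

section Graph

variable {V : Type*} {G : SimpleGraph V}

theorem isStrongResolvingSet_univ (G : SimpleGraph V) : IsStrongResolvingSet G Set.univ :=
  fun _ v _ => ⟨v, Set.mem_univ v, Or.inl (by rw [SimpleGraph.dist_self, add_zero])⟩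

theorem SimpleGraph.dist_le_of_ediam_le {k : ℕ} (hG : G.ediam ≤ k) (u v : V) :
    G.dist u v ≤ k := by
  have hreach : G.Reachable u v :=
    G.reachable_of_edist_ne_top (ne_top_of_le_ne_top (by simp) (G.edist_le_ediam.trans hG))
  exact_mod_cast hreach.coe_dist_eq_edist ▸ G.edist_le_ediam.trans hG

theorem StronglyResolves.adj_iff_not_adj (hG : G.ediam ≤ 2) {w u v : V}
    (h : StronglyResolves G w u v) (huv : u ≠ v) (hwu : w ≠ u) (hwv : w ≠ v) :
    G.Adj u w ↔ ¬G.Adj v w := by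
  have hconn := G.preconnected_of_ediam_ne_top (ne_top_of_le_ne_top (by simp) hG)
  have huv₁ := (hconn u v).pos_dist_of_ne huv
  have huw₁ := (hconn u w).pos_dist_of_ne hwu.symm
  have hvw₁ := (hconn v w).pos_dist_of_ne hwv.symm
  have huv₂ := G.dist_le_of_ediam_le (k := 2) hG u v
  have huw₂ := G.dist_le_of_ediam_le (k := 2) hG u w
  have hvw₂ := G.dist_le_of_ediam_le (k := 2) hG v w
  unfold StronglyResolves at h
  rw [G.dist_comm (u := v) (v := u)] at h
  rw [← SimpleGraph.dist_eq_one_iff_adj, ← SimpleGraph.dist_eq_one_iff_adj]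
  rcases h with h | h <;> omega

theorem IsStrongResolvingSet.finite_of_ediam_le_two (hG : G.ediam ≤ 2) {W : Set V}
    (hW : IsStrongResolvingSet G W) (hWf : W.Finite) : Finite V := by
  have : Finite W := hWf
  let nbhd : (Wᶜ : Set V) → Set W := fun v => {w | G.Adj v w}
  have hinj : Function.Injective nbhd := by
    intro u v huv
    by_contra hne
    have huv' : u.1 ≠ v.1 := Subtype.coe_injective.ne hne
    obtain ⟨w, hwW, hres⟩ := hW u v huv'
    have hsame : G.Adj u w ↔ G.Adj v w := Set.ext_iff.mp huv ⟨w, hwW⟩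
    have := hres.adj_iff_not_adj hG huv' (ne_of_mem_of_not_mem hwW u.2)
      (ne_of_mem_of_not_mem hwW v.2)
    tauto
  have : Finite (Wᶜ : Set V) := Finite.of_injective nbhd hinj
  exact Set.finite_univ_iff.mp (Set.union_compl_self W ▸ hWf.union (Set.toFinite Wᶜ))

end Graph

section Lattice

variable {L : Type*} [Lattice L] [OrderBot L]

theorem exists_isAtom_ne_ne
    (hatoms : ∃ a b c : L, IsAtom a ∧ IsAtom b ∧ IsAtom c ∧ a ≠ b ∧ a ≠ c ∧ b ≠ c) (p q : L) :
    ∃ r : L, IsAtom r ∧ r ≠ p ∧ r ≠ q := by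
  obtain ⟨a, b, c, ha, hb, hc, hab, hac, hbc⟩ := hatoms
  by_cases hapq : a ≠ p ∧ a ≠ q
  · exact ⟨a, ha, hapq⟩
  by_cases hbpq : b ≠ p ∧ b ≠ q
  · exact ⟨b, hb, hbpq⟩
  exact ⟨c, hc, by grind, by grind⟩

theorem gcL_adj_of_le_of_disjoint {x w : ZStar L} {p q : L} (hp : p ≠ ⊥) (hpx : p ≤ x.1)
    (hpw : p ≤ w.1) (hq : q ≠ ⊥) (hqw : q ≤ w.1) (hqx : Disjoint q x.1) : (GcL L).Adj x w := by
  refine ⟨?_, ne_bot_of_le_ne_bot hp (le_inf hpx hpw)⟩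
  rintro rfl
  exact hq (hqx.eq_bot_of_le hqw)

theorem exists_gcL_adj_adj [IsAtomic L]
    (h0dist : ∀ a b c : L, a ⊓ b = ⊥ → a ⊓ c = ⊥ → a ⊓ (b ⊔ c) = ⊥)
    (hatoms : ∃ a b c : L, IsAtom a ∧ IsAtom b ∧ IsAtom c ∧ a ≠ b ∧ a ≠ c ∧ b ≠ c)
    {x y : ZStar L} (hxy : Disjoint x.1 y.1) :
    ∃ w : ZStar L, (GcL L).Adj x w ∧ (GcL L).Adj w y := by
  obtain ⟨p, hp, hpx⟩ := (eq_bot_or_exists_atom_le x.1).resolve_left x.2.1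
  obtain ⟨q, hq, hqy⟩ := (eq_bot_or_exists_atom_le y.1).resolve_left y.2.1
  obtain ⟨r, hr, hrp, hrq⟩ := exists_isAtom_ne_ne hatoms p q
  have hrpq : r ⊓ (p ⊔ q) = ⊥ := h0dist r p q (disjoint_iff.mp (hr.disjoint_of_ne hp hrp))
    (disjoint_iff.mp (hr.disjoint_of_ne hq hrq))
  let w : ZStar L := ⟨p ⊔ q, ne_bot_of_le_ne_bot hp.1 le_sup_left, r, hr.1, by rwa [inf_comm]⟩
  refine ⟨w, ?_, (GcL L).adj_symm ?_⟩
  · exact gcL_adj_of_le_of_disjoint hp.1 hpx le_sup_left hq.1 le_sup_right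
      (hxy.mono_right hqy).symm
  · exact gcL_adj_of_le_of_disjoint hq.1 hqy le_sup_right hp.1 le_sup_left (hxy.mono_left hpx)

theorem gcL_ediam_le_two [IsAtomic L]
    (h0dist : ∀ a b c : L, a ⊓ b = ⊥ → a ⊓ c = ⊥ → a ⊓ (b ⊔ c) = ⊥)
    (hatoms : ∃ a b c : L, IsAtom a ∧ IsAtom b ∧ IsAtom c ∧ a ≠ b ∧ a ≠ c ∧ b ≠ c) :
    (GcL L).ediam ≤ 2 := by
  refine SimpleGraph.ediam_le_of_edist_le fun x y => ?_
  by_cases hadj : (GcL L).Adj x y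
  · exact ((GcL L).edist_le hadj.toWalk).trans (by simp)
  by_cases hxy : x = y
  · simp [hxy]
  have hdisj : Disjoint x.1 y.1 := disjoint_iff.mpr (by_contra fun h => hadj ⟨hxy, h⟩)
  obtain ⟨w, hxw, hwy⟩ := exists_gcL_adj_adj h0dist hatoms hdisj
  exact ((GcL L).edist_le (hxw.toWalk.append hwy.toWalk)).trans (by simp)

end Lattice

/-- for an atomic 0-distributive lattice with at least three atoms,
the complement of the zero-divisor graph has a finite strong resolving set iff it is a
finite graph. -/
theorem gc_finite_strong_resolving_iff_finite
    (L : Type*) [Lattice L] [OrderBot L] [IsAtomic L]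
    (h0dist : ∀ a b c : L, a ⊓ b = ⊥ → a ⊓ c = ⊥ → a ⊓ (b ⊔ c) = ⊥)
    (hatoms : ∃ a b c : L, IsAtom a ∧ IsAtom b ∧ IsAtom c ∧ a ≠ b ∧ a ≠ c ∧ b ≠ c) :
    (∃ W : Set (ZStar L), W.Finite ∧ IsStrongResolvingSet (GcL L) W) ↔ Finite (ZStar L) := by
  constructor
  · rintro ⟨W, hWf, hW⟩
    exact hW.finite_of_ediam_le_two (gcL_ediam_le_two h0dist hatoms) hWf
  · exact fun _ => ⟨Set.univ, Set.finite_univ, isStrongResolvingSet_univ _⟩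
end

section
/- Let L be an atomic 0-distributive lattice with least element 0 having at least three distinct atoms. Then every vertex x ∈ Z*(L) of G^c(L) is mutually maximally distant in G^c(L) from some vertex y ∈ Z*(L); consequently the vertex set of the strong resolving graph of G^c(L) (the boundary of G^c(L)) is all of Z*(L). -/
/-- `u` is maximally distant from `v` in `G`. -/
def MaxDistant {V : Type*} (G : SimpleGraph V) (u v : V) : Prop :=
  ∀ w : V, G.Adj u w → G.dist w v ≤ G.dist u v

/-- `u` and `v` are mutually maximally distant in `G`. -/
def MutuallyMaxDistant {V : Type*} (G : SimpleGraph V) (u v : V) : Prop :=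
  MaxDistant G u v ∧ MaxDistant G v u

/-
If `x ⊓ b = ⊥` with `b ≠ ⊥`, pick an atom `q ≤ b`; then `x` and `q` are non-adjacent vertices.
Any two non-adjacent vertices `u, v` have a common neighbour: for atoms `p ≤ u`, `q ≤ v` and a
third atom `r`, 0-distributivity gives `(p ⊔ q) ⊓ r = ⊥`, so `p ⊔ q` is a vertex meeting both.
Hence `G^c(L)` has diameter at most `2` and `d(x, q) = 2`, and a pair of vertices realising the
diameter is mutually maximally distant.
-/

theorem SimpleGraph.mutuallyMaxDistant_of_dist_eq_of_forall_dist_le {V : Type*}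
    {G : SimpleGraph V} {n : ℕ} (hbound : ∀ a b, G.dist a b ≤ n) {u v : V}
    (huv : G.dist u v = n) : MutuallyMaxDistant G u v :=
  ⟨fun w _ => huv ▸ hbound w v, fun w _ => G.dist_comm.trans huv ▸ hbound w u⟩

theorem exists_ne_ne_of_three_distinct {α : Type*} {P : α → Prop}
    (h : ∃ a b c, P a ∧ P b ∧ P c ∧ a ≠ b ∧ a ≠ c ∧ b ≠ c) (p q : α) :
    ∃ r, P r ∧ r ≠ p ∧ r ≠ q := by
  obtain ⟨a, b, c, ha, hb, hc, hab, hac, hbc⟩ := h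
  by_contra! hpq
  rcases eq_or_ne a p with rfl | hap
  · exact hbc ((hpq b hb hab.symm).trans (hpq c hc hac.symm).symm)
  rcases eq_or_ne b p with rfl | hbp
  · exact hac ((hpq a ha hap).trans (hpq c hc hbc.symm).symm)
  exact hab ((hpq a ha hap).trans (hpq b hb hbp).symm)

section

variable {L : Type*} [Lattice L] [OrderBot L]

theorem inf_ne_bot_of_atom_le_of_le {p a b : L} (hp : IsAtom p) (ha : p ≤ a) (hb : p ≤ b) :
    a ⊓ b ≠ ⊥ :=
  fun h => hp.1 (eq_bot_iff.2 (h ▸ le_inf ha hb))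

theorem ZStar.exists_atom_inf_eq_bot [IsAtomic L] (x : ZStar L) :
    ∃ q : L, IsAtom q ∧ x.1 ⊓ q = ⊥ := by
  obtain ⟨-, b, hb, hxb⟩ := x.2
  obtain ⟨q, hq, hqb⟩ := (eq_bot_or_exists_atom_le b).resolve_left hb
  exact ⟨q, hq, eq_bot_iff.2 ((inf_le_inf_left _ hqb).trans hxb.le)⟩

namespace GcL

variable [IsAtomic L] (h0dist : ∀ a b c : L, a ⊓ b = ⊥ → a ⊓ c = ⊥ → a ⊓ (b ⊔ c) = ⊥)
  (hatoms : ∃ a b c : L, IsAtom a ∧ IsAtom b ∧ IsAtom c ∧ a ≠ b ∧ a ≠ c ∧ b ≠ c)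
include h0dist hatoms

theorem commonNeighbors_nonempty {u v : ZStar L} (huv : u.1 ⊓ v.1 = ⊥) :
    ((GcL L).commonNeighbors u v).Nonempty := by
  obtain ⟨p, hp, hpu⟩ := (eq_bot_or_exists_atom_le u.1).resolve_left u.2.1
  obtain ⟨q, hq, hqv⟩ := (eq_bot_or_exists_atom_le v.1).resolve_left v.2.1
  have hpq : p ≠ q := by
    rintro rfl
    exact inf_ne_bot_of_atom_le_of_le hp hpu hqv huv
  obtain ⟨r, hr, hrp, hrq⟩ := exists_ne_ne_of_three_distinct hatoms p q
  have hpqr : (p ⊔ q) ⊓ r = ⊥ := by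
    rw [inf_comm]
    exact h0dist r p q (disjoint_iff.1 (hr.disjoint_of_ne hp hrp))
      (disjoint_iff.1 (hr.disjoint_of_ne hq hrq))
  let w : ZStar L := ⟨p ⊔ q, fun h => hp.1 (eq_bot_iff.2 (h ▸ le_sup_left)), r, hr.1, hpqr⟩
  have huw : u.1 ⊓ w.1 ≠ ⊥ := inf_ne_bot_of_atom_le_of_le hp hpu le_sup_left
  have hvw : v.1 ⊓ w.1 ≠ ⊥ := inf_ne_bot_of_atom_le_of_le hq hqv le_sup_right
  refine ⟨w, (GcL L).mem_commonNeighbors.2 ⟨⟨?_, huw⟩, ⟨?_, hvw⟩⟩⟩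
  · intro h
    apply hvw
    rw [← h, inf_comm]
    exact huv
  · intro h
    apply huw
    rw [← h]
    exact huv

theorem dist_eq_two_of_inf_eq_bot {u v : ZStar L} (huv : u.1 ⊓ v.1 = ⊥) :
    (GcL L).dist u v = 2 := by
  have hne : u ≠ v := by
    rintro rfl
    exact u.2.1 (inf_idem u.1 ▸ huv)
  have hedist : (GcL L).edist u v = 2 :=
    SimpleGraph.edist_eq_two_iff.2
      ⟨hne, fun h => h.2 huv, commonNeighbors_nonempty h0dist hatoms huv⟩
  simp [SimpleGraph.dist, hedist]

theorem dist_le_two (u v : ZStar L) : (GcL L).dist u v ≤ 2 := by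
  by_cases hadj : (GcL L).Adj u v
  · exact (SimpleGraph.dist_eq_one_iff_adj.2 hadj).trans_le one_le_two
  obtain rfl | hne := eq_or_ne u v
  · simp
  have huv : u.1 ⊓ v.1 = ⊥ := not_not.1 fun h => hadj ⟨hne, h⟩
  exact (dist_eq_two_of_inf_eq_bot h0dist hatoms huv).le

end GcL

end

/-- for an atomic 0-distributive lattice with at least three atoms,
every vertex of `G^c(L)` is mutually maximally distant from some vertex; hence the
boundary (vertex set of the strong resolving graph) is all of `Z*(L)`. -/
theorem every_vertex_in_boundary
    (L : Type*) [Lattice L] [OrderBot L] [IsAtomic L]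
    (h0dist : ∀ a b c : L, a ⊓ b = ⊥ → a ⊓ c = ⊥ → a ⊓ (b ⊔ c) = ⊥)
    (hatoms : ∃ a b c : L, IsAtom a ∧ IsAtom b ∧ IsAtom c ∧ a ≠ b ∧ a ≠ c ∧ b ≠ c) :
    ∀ x : ZStar L, ∃ y : ZStar L, x ≠ y ∧ MutuallyMaxDistant (GcL L) x y := by
  intro x
  obtain ⟨q, hq, hxq⟩ := x.exists_atom_inf_eq_bot
  let y : ZStar L := ⟨q, hq.1, x.1, x.2.1, inf_comm x.1 q ▸ hxq⟩
  have hxy : (GcL L).dist x y = 2 := GcL.dist_eq_two_of_inf_eq_bot h0dist hatoms hxq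
  refine ⟨y, ?_, SimpleGraph.mutuallyMaxDistant_of_dist_eq_of_forall_dist_le
    (GcL.dist_le_two h0dist hatoms) hxy⟩
  intro h
  simp [h] at hxy
end

section
/- Let L be an atomic 0-distributive lattice with least element 0 having at least three distinct atoms. If x, y ∈ Z*(L) are distinct vertices of G^c(L) with equal annihilators x^⊥ = y^⊥, then x and y are mutually maximally distant in G^c(L) (hence adjacent in the strong resolving graph of G^c(L)). -/
/-- The annihilator of an element of a lattice with least element `⊥`. -/
def annih {L : Type*} [Lattice L] [OrderBot L] (x : L) : Set L :=
  {b : L | x ⊓ b = ⊥}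

/-!
Equal annihilators make `x` and `y` closed twins in `G^c(L)`: `y ∉ y^⊥ = x^⊥` gives `x ⊓ y ≠ 0`, and a
neighbour `w` of `x` has `w ∉ x^⊥ = y^⊥`, so it is `y` or a neighbour of `y`. Hence `d(x, y) = 1` and
every neighbour of `x` is within distance one of `y`, and symmetrically.
-/

section MaxDistant

variable {V : Type*} {G : SimpleGraph V} {u v : V}

theorem maxDistant_of_adj (huv : G.Adj u v) (hnbr : ∀ w, G.Adj u w → w ≠ v → G.Adj w v) :
    MaxDistant G u v := by
  intro w huw
  rw [SimpleGraph.dist_eq_one_iff_adj.2 huv]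
  by_cases hwv : w = v
  · simp [hwv]
  · exact (SimpleGraph.dist_eq_one_iff_adj.2 (hnbr w huw hwv)).le

end MaxDistant

namespace GcL

variable {L : Type*} [Lattice L] [OrderBot L] {x y w : ZStar L}

theorem adj_of_annih_eq (hxy : x ≠ y) (hann : annih x.1 = annih y.1) : (GcL L).Adj x y := by
  refine ⟨hxy, fun hxy_bot => y.2.1 ?_⟩
  have hy : y.1 ⊓ y.1 = ⊥ := (hann ▸ hxy_bot : y.1 ∈ annih y.1)
  rwa [inf_idem] at hy

theorem adj_of_adj_of_annih_eq (hann : annih x.1 = annih y.1) (hxw : (GcL L).Adj x w)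
    (hwy : w ≠ y) : (GcL L).Adj w y := by
  refine ⟨hwy, fun hwy_bot => hxw.2 ?_⟩
  have hw : y.1 ⊓ w.1 = ⊥ := by rwa [inf_comm]
  exact (hann ▸ hw : w.1 ∈ annih x.1)

end GcL

theorem mmd_of_eq_annihilator_general
    (L : Type*) [Lattice L] [OrderBot L]
    (x y : ZStar L) (hxy : x ≠ y) (hann : annih x.1 = annih y.1) :
    MutuallyMaxDistant (GcL L) x y :=
  ⟨maxDistant_of_adj (GcL.adj_of_annih_eq hxy hann)
      fun _ hw hwy => GcL.adj_of_adj_of_annih_eq hann hw hwy,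
    maxDistant_of_adj (GcL.adj_of_annih_eq hxy.symm hann.symm)
      fun _ hw hwx => GcL.adj_of_adj_of_annih_eq hann.symm hw hwx⟩

/-- in an atomic 0-distributive lattice with at least three atoms,
distinct vertices of `G^c(L)` with equal annihilators are mutually maximally distant. -/
theorem mmd_of_eq_annihilator
    (L : Type*) [Lattice L] [OrderBot L] [IsAtomic L]
    (h0dist : ∀ a b c : L, a ⊓ b = ⊥ → a ⊓ c = ⊥ → a ⊓ (b ⊔ c) = ⊥)
    (hatoms : ∃ a b c : L, IsAtom a ∧ IsAtom b ∧ IsAtom c ∧ a ≠ b ∧ a ≠ c ∧ b ≠ c)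
    (x y : ZStar L) (hxy : x ≠ y) (hann : annih x.1 = annih y.1) :
    MutuallyMaxDistant (GcL L) x y :=
  mmd_of_eq_annihilator_general L x y hxy hann
end

section
/- Let n ≥ 3 and let 2^n be the Boolean lattice of all subsets of an n-element set. In the graph G^c(2^n), two distinct vertices s, t (nonempty proper subsets) are mutually maximally distant if and only if s ∩ t = ∅. Consequently, the strong resolving graph of G^c(2^n) equals the zero-divisor graph G(2^n). -/
/-- Vertices of the (complement of the) zero-divisor graph of the Boolean lattice `2^n`:
the nonempty proper subsets of an `n`-element set. -/
def BVert (n : ℕ) : Type :=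
  {s : Finset (Fin n) // s ≠ ∅ ∧ s ≠ Finset.univ}

/-- The complement `G^c(2^n)` of the zero-divisor graph of the Boolean lattice `2^n`:
distinct nonempty proper subsets are adjacent iff they intersect. -/
def GcB (n : ℕ) : SimpleGraph (BVert n) where
  Adj s t := s ≠ t ∧ s.1 ∩ t.1 ≠ ∅
  symm := ⟨fun s t h => ⟨h.1.symm, by rw [Finset.inter_comm]; exact h.2⟩⟩
  loopless := ⟨fun s h => h.1 rfl⟩

/-- The zero-divisor graph `G(2^n)` of the Boolean lattice `2^n`:
distinct nonempty proper subsets are adjacent iff they are disjoint. -/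
def GB (n : ℕ) : SimpleGraph (BVert n) where
  Adj s t := s ≠ t ∧ s.1 ∩ t.1 = ∅
  symm := ⟨fun s t h => ⟨h.1.symm, by rw [Finset.inter_comm]; exact h.2⟩⟩
  loopless := ⟨fun s h => (h.1 rfl).elim⟩

/-- The strong resolving graph of `G`. -/
def srGraph {V : Type*} (G : SimpleGraph V) : SimpleGraph V where
  Adj u v := u ≠ v ∧ MutuallyMaxDistant G u v
  symm := ⟨fun u v h => ⟨h.1.symm, h.2.2, h.2.1⟩⟩
  loopless := ⟨fun u h => h.1 rfl⟩


/-!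
Any two vertices of `G^c(2^n)` are joined by a path of length at most two (through a
two-element set meeting both, which is proper as `n ≥ 3`), and a pair is at distance two
exactly when it is disjoint. Hence a disjoint pair is trivially mutually maximally distant.
For an intersecting pair `s ≠ t`, say with `a ∈ s \ t`, the singleton `{a}` is a neighbour
of `s` at distance two from `t`, while `s` itself is at distance one from `t`.
-/

open SimpleGraph

namespace BVert

variable {n : ℕ}

lemma nonempty (s : BVert n) : s.1.Nonempty :=
  Finset.nonempty_of_ne_empty s.2.1

def ofCardLt (s : Finset (Fin n)) (hs : s.Nonempty) (hcard : s.card < n) : BVert n :=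
  ⟨s, hs.ne_empty, fun h => by simp [h] at hcard⟩

lemma ne_of_inter_eq_empty {s t : BVert n} (h : s.1 ∩ t.1 = ∅) : s ≠ t := by
  rintro rfl
  exact s.nonempty.ne_empty (by rwa [Finset.inter_self] at h)

end BVert

namespace GcB

variable {n : ℕ}

lemma exists_adj_adj_of_inter_eq_empty (hn : 3 ≤ n) {s t : BVert n} (h : s.1 ∩ t.1 = ∅) :
    ∃ w, (GcB n).Adj s w ∧ (GcB n).Adj w t := by
  obtain ⟨a, has⟩ := s.nonempty
  obtain ⟨b, hbt⟩ := t.nonempty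
  have hat : a ∉ t.1 := fun hat => Finset.notMem_empty a (h ▸ Finset.mem_inter.2 ⟨has, hat⟩)
  have hbs : b ∉ s.1 := fun hbs => Finset.notMem_empty b (h ▸ Finset.mem_inter.2 ⟨hbs, hbt⟩)
  let w := BVert.ofCardLt {a, b} (Finset.insert_nonempty a {b})
    ((Finset.card_le_two).trans_lt (by omega))
  refine ⟨w, ⟨?_, ?_⟩, ⟨?_, ?_⟩⟩
  · rintro rfl
    exact hbs (by simp [w, BVert.ofCardLt])
  · exact Finset.nonempty_iff_ne_empty.1 ⟨a, by simp [w, BVert.ofCardLt, has]⟩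
  · intro hwt
    exact hat (hwt ▸ by simp [w, BVert.ofCardLt])
  · exact Finset.nonempty_iff_ne_empty.1 ⟨b, by simp [w, BVert.ofCardLt, hbt]⟩

lemma exists_walk_length_le_two (hn : 3 ≤ n) (s t : BVert n) :
    ∃ p : (GcB n).Walk s t, p.length ≤ 2 := by
  by_cases hst : s = t
  · subst hst
    exact ⟨Walk.nil, Nat.zero_le 2⟩
  by_cases h : s.1 ∩ t.1 = ∅
  · obtain ⟨w, hsw, hwt⟩ := exists_adj_adj_of_inter_eq_empty hn h
    exact ⟨Walk.cons hsw (Walk.cons hwt Walk.nil), le_rfl⟩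
  · exact ⟨Walk.cons ⟨hst, h⟩ Walk.nil, Nat.le_succ 1⟩

lemma reachable (hn : 3 ≤ n) (s t : BVert n) : (GcB n).Reachable s t :=
  let ⟨p, _⟩ := exists_walk_length_le_two hn s t
  ⟨p⟩

lemma dist_le_two (hn : 3 ≤ n) (s t : BVert n) : (GcB n).dist s t ≤ 2 :=
  let ⟨p, hp⟩ := exists_walk_length_le_two hn s t
  (dist_le p).trans hp

lemma dist_eq_two_of_inter_eq_empty (hn : 3 ≤ n) {s t : BVert n} (h : s.1 ∩ t.1 = ∅) :
    (GcB n).dist s t = 2 := by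
  have hlt := (reachable hn s t).one_lt_dist_of_ne_of_not_adj (BVert.ne_of_inter_eq_empty h)
    (fun hadj => hadj.2 h)
  have hle := dist_le_two hn s t
  omega

lemma maxDistant_of_inter_eq_empty (hn : 3 ≤ n) {s t : BVert n} (h : s.1 ∩ t.1 = ∅) :
    MaxDistant (GcB n) s t :=
  fun w _ => (dist_le_two hn w t).trans (dist_eq_two_of_inter_eq_empty hn h).ge

lemma not_maxDistant_of_not_subset (hn : 3 ≤ n) {s t : BVert n} (h : s.1 ∩ t.1 ≠ ∅)
    (hsub : ¬ s.1 ⊆ t.1) : ¬ MaxDistant (GcB n) s t := by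
  obtain ⟨a, has, hat⟩ := Finset.not_subset.1 hsub
  let w := BVert.ofCardLt {a} (Finset.singleton_nonempty a) (by simp; omega)
  have hwt : w.1 ∩ t.1 = ∅ := Finset.singleton_inter_of_notMem hat
  have hsw : (GcB n).Adj s w :=
    ⟨fun hsw => h (hsw ▸ hwt),
      Finset.nonempty_iff_ne_empty.1 ⟨a, Finset.mem_inter.2 ⟨has, Finset.mem_singleton_self a⟩⟩⟩
  have hst : (GcB n).dist s t = 1 :=
    dist_eq_one_iff_adj.2 ⟨fun hst => hsub (hst ▸ subset_rfl), h⟩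
  intro hmax
  have := hmax w hsw
  rw [dist_eq_two_of_inter_eq_empty hn hwt, hst] at this
  omega

lemma mutuallyMaxDistant_iff (hn : 3 ≤ n) {s t : BVert n} (hst : s ≠ t) :
    MutuallyMaxDistant (GcB n) s t ↔ s.1 ∩ t.1 = ∅ := by
  refine ⟨fun ⟨hs, ht⟩ => ?_, fun h => ⟨maxDistant_of_inter_eq_empty hn h,
    maxDistant_of_inter_eq_empty hn (by rwa [Finset.inter_comm])⟩⟩
  by_contra h
  by_cases hsub : s.1 ⊆ t.1
  · exact not_maxDistant_of_not_subset hn (by rwa [Finset.inter_comm])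
      (fun hts => hst (Subtype.ext (hsub.antisymm hts))) ht
  · exact not_maxDistant_of_not_subset hn h hsub hs

end GcB

/-- for `n ≥ 3`, distinct vertices of `G^c(2^n)` are mutually maximally
distant iff they are disjoint; consequently the strong resolving graph of `G^c(2^n)`
equals the zero-divisor graph `G(2^n)`. -/
theorem srGraph_gc_boolean (n : ℕ) (hn : 3 ≤ n) :
    (∀ s t : BVert n, s ≠ t →
      (MutuallyMaxDistant (GcB n) s t ↔ s.1 ∩ t.1 = ∅)) ∧
    srGraph (GcB n) = GB n := by
  refine ⟨fun s t => GcB.mutuallyMaxDistant_iff hn, ?_⟩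
  ext s t
  exact and_congr_right (GcB.mutuallyMaxDistant_iff hn)
end

section
/- Let n ≥ 3 and let F_1, …, F_n be finite fields, and set R = F_1 × ⋯ × F_n. Let Γ^c(R) be the complement of the zero-divisor graph of R: its vertices are the nonzero zero-divisors Z*(R) of R, and distinct vertices x, y are adjacent iff x·y ≠ 0. Then sdim_M(Γ^c(R)) = |Z*(R)| − 2^{n−1} + 1. -/
/-- The set of nonzero zero-divisors of a commutative ring `R`. -/
def ZStarR (R : Type*) [CommRing R] : Type _ :=
  {x : R // x ≠ 0 ∧ ∃ y : R, y ≠ 0 ∧ x * y = 0}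

/-- The complement `Γ^c(R)` of the zero-divisor graph of a commutative ring `R`:
distinct nonzero zero-divisors are adjacent iff their product is nonzero. -/
def GammaC (R : Type*) [CommRing R] : SimpleGraph (ZStarR R) where
  Adj x y := x ≠ y ∧ x.1 * y.1 ≠ 0
  symm := ⟨fun x y h => ⟨h.1.symm, by rw [mul_comm]; exact h.2⟩⟩
  loopless := ⟨fun x h => h.1 rfl⟩

/-- The strong metric dimension of `G`. -/
noncomputable def sdim {V : Type*} (G : SimpleGraph V) : ℕ :=
  sInf {k | ∃ W : Set V, W.Finite ∧ IsStrongResolvingSet G W ∧ Nat.card W = k}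

/-!
Adjacency in `Γ^c(R)` only depends on supports: distinct vertices are adjacent iff their supports
meet. For `n ≥ 3`, two vertices with disjoint supports containing `i` and `j` have the common
neighbour supported on `{i, j}`, so the graph has diameter two. In a graph of diameter two a set is
strongly resolving iff it is a vertex cover of the strong resolving graph, whence
`sdim = |Z*(R)| - α`, with `α` its independence number. Here its edges join vertices with disjoint
or with equal supports, so `α` is the largest size of an intersecting family of proper nonempty
subsets of the index set. Adding the full set keeps such a family intersecting, so `α ≤ 2^(n-1) - 1`,
and a maximal intersecting family (which has `2^(n-1)` members, the full set among them) attains it.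
-/

namespace SimpleGraph

variable {V : Type*} {G : SimpleGraph V} {u v w : V}

/-- The strong resolving graph `G_SR`: its edges join the mutually maximally distant pairs. -/
def strongResolvingGraph (G : SimpleGraph V) : SimpleGraph V where
  Adj u v := u ≠ v ∧ (∀ w, G.Adj u w → G.dist w v ≤ G.dist u v) ∧
    ∀ w, G.Adj v w → G.dist w u ≤ G.dist v u
  symm := ⟨fun _ _ ⟨hne, hu, hv⟩ => ⟨hne.symm, hv, hu⟩⟩
  loopless := ⟨fun _ h => h.1 rfl⟩

lemma strongResolvingGraph_adj :
    G.strongResolvingGraph.Adj u v ↔ u ≠ v ∧ (∀ w, G.Adj u w → G.dist w v ≤ G.dist u v) ∧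
      ∀ w, G.Adj v w → G.dist w u ≤ G.dist v u :=
  Iff.rfl

lemma stronglyResolves_left : StronglyResolves G u u v :=
  Or.inr (by simp [dist_comm])

lemma stronglyResolves_right : StronglyResolves G v u v :=
  Or.inl (by simp)

lemma stronglyResolves_comm : StronglyResolves G w u v ↔ StronglyResolves G w v u :=
  or_comm

lemma dist_le_two_of_ediam_le_two (hG : G.ediam ≤ 2) (u v : V) : G.dist u v ≤ 2 := by
  have hreach := preconnected_of_ediam_ne_top (ne_top_of_le_ne_top (by decide) hG) u v
  exact_mod_cast hreach.coe_dist_eq_edist ▸ (edist_le_ediam.trans hG)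

lemma pos_dist_of_ediam_le_two (hG : G.ediam ≤ 2) (huv : u ≠ v) : 0 < G.dist u v :=
  (preconnected_of_ediam_ne_top (ne_top_of_le_ne_top (by decide) hG) u v).pos_dist_of_ne huv

lemma dist_eq_two_of_ediam_le_two (hG : G.ediam ≤ 2) (huv : u ≠ v) (h : ¬G.Adj u v) :
    G.dist u v = 2 := by
  have := dist_le_two_of_ediam_le_two hG u v
  have := pos_dist_of_ediam_le_two hG huv
  have : G.dist u v ≠ 1 := fun h1 => h (dist_eq_one_iff_adj.1 h1)
  omega

lemma strongResolvingGraph_adj_of_dist_eq_two (hG : G.ediam ≤ 2) (huv : G.dist u v = 2) :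
    G.strongResolvingGraph.Adj u v :=
  strongResolvingGraph_adj.2 ⟨fun h => by simp [h] at huv,
    fun w _ => huv ▸ dist_le_two_of_ediam_le_two hG w v,
    fun w _ => (dist_le_two_of_ediam_le_two hG w u).trans (huv ▸ dist_comm.le)⟩

lemma eq_of_stronglyResolves_of_strongResolvingGraph_adj (hG : G.ediam ≤ 2)
    (huv : G.strongResolvingGraph.Adj u v) (hw : G.dist u w = G.dist u v + G.dist v w) :
    w = v := by
  rw [strongResolvingGraph_adj] at huv
  by_contra hwv
  have h₁ := pos_dist_of_ediam_le_two hG huv.1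
  have h₂ := pos_dist_of_ediam_le_two hG (Ne.symm hwv)
  have h₃ := dist_le_two_of_ediam_le_two hG u w
  have hvw : G.Adj v w := dist_eq_one_iff_adj.1 (by omega)
  have := huv.2.2 w hvw
  rw [dist_comm (u := w), dist_comm (u := v)] at this
  omega

lemma exists_stronglyResolves_of_dist_lt (hG : G.ediam ≤ 2)
    {W : Set V} (hW : G.strongResolvingGraph.IsVertexCover W) (huv : u ≠ v) (hw : G.Adj u w)
    (hfar : G.dist u v < G.dist w v) : ∃ x ∈ W, StronglyResolves G x u v := by
  have h₁ := pos_dist_of_ediam_le_two hG huv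
  have h₂ := dist_le_two_of_ediam_le_two hG w v
  have huw : G.dist u w = 1 := dist_eq_one_iff_adj.2 hw
  rcases hW (strongResolvingGraph_adj_of_dist_eq_two hG (show G.dist w v = 2 by omega))
    with hwW | hvW
  · refine ⟨w, hwW, Or.inr ?_⟩
    rw [dist_comm (u := v) (v := w), dist_comm (u := v) (v := u)]
    omega
  · exact ⟨v, hvW, stronglyResolves_right⟩

theorem isStrongResolvingSet_iff_isVertexCover (hG : G.ediam ≤ 2) {W : Set V} :
    IsStrongResolvingSet G W ↔ G.strongResolvingGraph.IsVertexCover W := by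
  constructor
  · intro hW u v huv
    obtain ⟨w, hwW, hw | hw⟩ := hW u v huv.1
    · exact Or.inr (eq_of_stronglyResolves_of_strongResolvingGraph_adj hG huv hw ▸ hwW)
    · exact Or.inl (eq_of_stronglyResolves_of_strongResolvingGraph_adj hG huv.symm hw ▸ hwW)
  · intro hW u v huv
    by_cases hsr : G.strongResolvingGraph.Adj u v
    · rcases hW hsr with hu | hv
      exacts [⟨u, hu, stronglyResolves_left⟩, ⟨v, hv, stronglyResolves_right⟩]
    simp only [strongResolvingGraph_adj, huv, ne_eq, not_false_eq_true, true_and, not_and_or,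
      not_forall, not_le] at hsr
    rcases hsr with ⟨w, hw, hfar⟩ | ⟨w, hw, hfar⟩
    · exact exists_stronglyResolves_of_dist_lt hG hW huv hw hfar
    · obtain ⟨x, hx, hres⟩ := exists_stronglyResolves_of_dist_lt hG hW (Ne.symm huv) hw hfar
      exact ⟨x, hx, stronglyResolves_comm.1 hres⟩

lemma sInf_card_isVertexCover [Finite V] (H : SimpleGraph V) :
    sInf {k | ∃ W : Set V, W.Finite ∧ H.IsVertexCover W ∧ Nat.card W = k} =
      Nat.card V - H.indepNum := by
  have hcard (W : Set V) : Nat.card W = Nat.card V - Wᶜ.ncard := by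
    rw [← Set.ncard_add_ncard_compl W, Nat.card_coe_set_eq]
    omega
  apply le_antisymm
  · obtain ⟨s, hs⟩ := H.exists_isNIndepSet_indepNum
    refine Nat.sInf_le ⟨(↑s)ᶜ, Set.toFinite _, isVertexCover_compl.2 hs.isIndepSet, ?_⟩
    rw [hcard, compl_compl, Set.ncard_coe_finset, hs.card_eq]
  · refine le_csInf ⟨_, _, Set.toFinite _, isVertexCover_univ, rfl⟩ ?_
    rintro k ⟨W, -, hW, rfl⟩
    have hindep : H.IsIndepSet ↑(Wᶜ.toFinite.toFinset) := by
      simpa using isIndepSet_compl_iff_isVertexCover.2 hW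
    have := hindep.card_le_indepNum
    rw [← Set.ncard_eq_toFinset_card] at this
    rw [hcard]
    omega

lemma indepNum_lt_card [Finite V] (h : G.Adj u v) : G.indepNum < Nat.card V := by
  obtain ⟨s, hs⟩ := G.exists_isNIndepSet_indepNum
  have hs_ne : (↑s : Set V) ≠ Set.univ := fun hs_univ =>
    hs.isIndepSet (hs_univ ▸ Set.mem_univ u) (hs_univ ▸ Set.mem_univ v) h.ne h
  rw [← hs.card_eq, ← Set.ncard_coe_finset, ← Set.ncard_univ]
  exact Set.ncard_lt_ncard (Set.ssubset_univ_iff.2 hs_ne)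

theorem sdim_eq_card_sub_indepNum [Finite V] (hG : G.ediam ≤ 2) :
    sdim G = Nat.card V - G.strongResolvingGraph.indepNum := by
  simp only [sdim, isStrongResolvingSet_iff_isVertexCover hG]
  exact sInf_card_isVertexCover _

end SimpleGraph

section ProductOfDomains

open Finset SimpleGraph

variable {ι : Type*} [Fintype ι] {F : ι → Type*}

section Zero

variable [∀ i, Zero (F i)]

open Classical in
noncomputable def coordSupport (x : ∀ i, F i) : Finset ι := {i | x i ≠ 0}

lemma mem_coordSupport {x : ∀ i, F i} {i : ι} : i ∈ coordSupport x ↔ x i ≠ 0 := by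
  simp [coordSupport]

lemma coordSupport_eq_empty_iff {x : ∀ i, F i} : coordSupport x = ∅ ↔ x = 0 := by
  simp [Finset.eq_empty_iff_forall_notMem, mem_coordSupport, funext_iff]

end Zero

lemma exists_coordSupport_eq [∀ i, MulZeroOneClass (F i)] [∀ i, Nontrivial (F i)]
    (S : Finset ι) : ∃ x : ∀ i, F i, coordSupport x = S := by
  classical
  refine ⟨fun i => if i ∈ S then 1 else 0, ?_⟩
  ext i
  by_cases hi : i ∈ S <;> simp [mem_coordSupport, hi]

variable [∀ i, CommRing (F i)] [∀ i, IsDomain (F i)]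

lemma mul_eq_zero_iff_disjoint_coordSupport {x y : ∀ i, F i} :
    x * y = 0 ↔ Disjoint (coordSupport x) (coordSupport y) := by
  simp [funext_iff, Finset.disjoint_left, mem_coordSupport, or_iff_not_imp_left]

lemma nonzero_zeroDivisor_iff_coordSupport {x : ∀ i, F i} :
    (x ≠ 0 ∧ ∃ y, y ≠ 0 ∧ x * y = 0) ↔
      (coordSupport x).Nonempty ∧ coordSupport x ≠ univ := by
  classical
  simp only [← coordSupport_eq_empty_iff.not, mul_eq_zero_iff_disjoint_coordSupport,
    Finset.nonempty_iff_ne_empty]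
  refine and_congr_right fun _ => ⟨fun ⟨y, hy, hdisj⟩ hx => hy ?_, fun hx => ?_⟩
  · rwa [hx, ← top_eq_univ, top_disjoint, bot_eq_empty] at hdisj
  · obtain ⟨y, hy⟩ := exists_coordSupport_eq (F := F) (coordSupport x)ᶜ
    refine ⟨y, ?_, hy ▸ disjoint_compl_right⟩
    rwa [hy, compl_eq_empty_iff]

namespace ZStarR

instance finite (R : Type*) [CommRing R] [Finite R] : Finite (ZStarR R) :=
  Subtype.finite

lemma coordSupport_nonempty (u : ZStarR (∀ i, F i)) : (coordSupport u.1).Nonempty :=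
  (nonzero_zeroDivisor_iff_coordSupport.1 u.2).1

lemma coordSupport_ne_univ (u : ZStarR (∀ i, F i)) : coordSupport u.1 ≠ univ :=
  (nonzero_zeroDivisor_iff_coordSupport.1 u.2).2

lemma exists_coordSupport_eq {S : Finset ι} (hS : S.Nonempty) (hS' : S ≠ univ) :
    ∃ u : ZStarR (∀ i, F i), coordSupport u.1 = S := by
  obtain ⟨x, hx⟩ := _root_.exists_coordSupport_eq (F := F) S
  exact ⟨⟨x, nonzero_zeroDivisor_iff_coordSupport.2 (hx ▸ ⟨hS, hS'⟩)⟩, hx⟩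

end ZStarR

lemma gammaC_adj_iff {u v : ZStarR (∀ i, F i)} :
    (GammaC (∀ i, F i)).Adj u v ↔
      u ≠ v ∧ ¬Disjoint (coordSupport u.1) (coordSupport v.1) :=
  and_congr_right fun _ => mul_eq_zero_iff_disjoint_coordSupport.not

lemma gammaC_adj_of_mem_coordSupport {u v : ZStarR (∀ i, F i)}
    (huv : coordSupport u.1 ≠ coordSupport v.1) {i : ι} (hu : i ∈ coordSupport u.1)
    (hv : i ∈ coordSupport v.1) : (GammaC (∀ i, F i)).Adj u v :=
  gammaC_adj_iff.2 ⟨fun h => huv (h ▸ rfl), Finset.not_disjoint_iff.2 ⟨i, hu, hv⟩⟩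

lemma ediam_gammaC_le_two (hι : 3 ≤ Fintype.card ι) : (GammaC (∀ i, F i)).ediam ≤ 2 := by
  classical
  rw [ediam_le_iff]
  intro u v
  by_contra! h
  obtain ⟨huv, hnadj, hcommon⟩ := two_lt_edist_iff.1 h
  have hdisj : Disjoint (coordSupport u.1) (coordSupport v.1) :=
    not_not.1 fun hd => hnadj (gammaC_adj_iff.2 ⟨huv, hd⟩)
  obtain ⟨i, hi⟩ := u.coordSupport_nonempty
  obtain ⟨j, hj⟩ := v.coordSupport_nonempty
  have hij : ({i, j} : Finset ι) ≠ univ := fun h => by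
    have := card_le_two (a := i) (b := j)
    rw [h, card_univ] at this
    omega
  obtain ⟨w, hw⟩ := ZStarR.exists_coordSupport_eq (F := F) (insert_nonempty i {j}) hij
  have huw : (GammaC (∀ i, F i)).Adj u w := gammaC_adj_of_mem_coordSupport
    (fun h => disjoint_right.1 hdisj hj (h ▸ hw ▸ by simp)) hi (by simp [hw])
  have hvw : (GammaC (∀ i, F i)).Adj v w := gammaC_adj_of_mem_coordSupport
    (fun h => disjoint_left.1 hdisj hi (h ▸ hw ▸ by simp)) hj (by simp [hw])
  exact (Set.eq_empty_iff_forall_notMem.1 hcommon w) ((mem_commonNeighbors _).2 ⟨huw, hvw⟩)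

lemma dist_gammaC_eq_two (hι : 3 ≤ Fintype.card ι) {u v : ZStarR (∀ i, F i)} (huv : u ≠ v)
    (h : Disjoint (coordSupport u.1) (coordSupport v.1)) : (GammaC (∀ i, F i)).dist u v = 2 :=
  dist_eq_two_of_ediam_le_two (ediam_gammaC_le_two hι) huv fun hadj => (gammaC_adj_iff.1 hadj).2 h

lemma coordSupport_subset_of_forall_adj_dist_le (hι : 3 ≤ Fintype.card ι)
    {u v : ZStarR (∀ i, F i)} (huv : (GammaC (∀ i, F i)).Adj u v)
    (hu : ∀ w, (GammaC (∀ i, F i)).Adj u w →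
      (GammaC (∀ i, F i)).dist w v ≤ (GammaC (∀ i, F i)).dist u v) :
    coordSupport u.1 ⊆ coordSupport v.1 := by
  intro i hi
  by_contra hiv
  obtain ⟨k, hku, hkv⟩ := not_disjoint_iff.1 (gammaC_adj_iff.1 huv).2
  have hki : k ≠ i := fun h => hiv (h ▸ hkv)
  obtain ⟨w, hw⟩ := ZStarR.exists_coordSupport_eq (F := F) (singleton_nonempty i)
    fun h => hki (mem_singleton.1 (h ▸ mem_univ k))
  have huw : (GammaC (∀ i, F i)).Adj u w :=
    gammaC_adj_of_mem_coordSupport (fun h => hki (by rw [h, hw] at hku; simpa using hku)) hi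
      (by simp [hw])
  have hwv : (GammaC (∀ i, F i)).dist w v = 2 :=
    dist_gammaC_eq_two hι (fun h => hiv (h ▸ by simp [hw])) (by simpa [hw] using hiv)
  have := hu w huw
  rw [hwv, dist_eq_one_iff_adj.2 huv] at this
  omega

lemma forall_adj_dist_le_of_coordSupport_eq {u v : ZStarR (∀ i, F i)} (huv : u ≠ v)
    (h : coordSupport u.1 = coordSupport v.1) (w : ZStarR (∀ i, F i))
    (huw : (GammaC (∀ i, F i)).Adj u w) :
    (GammaC (∀ i, F i)).dist w v ≤ (GammaC (∀ i, F i)).dist u v := by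
  have hadj : (GammaC (∀ i, F i)).Adj u v :=
    gammaC_adj_iff.2 ⟨huv, by simpa [h] using v.coordSupport_nonempty.ne_empty⟩
  rw [dist_eq_one_iff_adj.2 hadj]
  by_cases hwv : w = v
  · simp [hwv]
  · refine (dist_eq_one_iff_adj.2 (gammaC_adj_iff.2 ⟨hwv, ?_⟩)).le
    rw [← h, disjoint_comm]
    exact (gammaC_adj_iff.1 huw).2

lemma strongResolvingGraph_gammaC_adj_iff (hι : 3 ≤ Fintype.card ι)
    {u v : ZStarR (∀ i, F i)} :
    (GammaC (∀ i, F i)).strongResolvingGraph.Adj u v ↔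
      u ≠ v ∧ (Disjoint (coordSupport u.1) (coordSupport v.1) ∨
        coordSupport u.1 = coordSupport v.1) := by
  refine ⟨fun h => ?_, ?_⟩
  · obtain ⟨huv, hu, hv⟩ := strongResolvingGraph_adj.1 h
    refine ⟨huv, or_iff_not_imp_left.2 fun hdisj => ?_⟩
    have hadj := gammaC_adj_iff.2 ⟨huv, hdisj⟩
    exact (coordSupport_subset_of_forall_adj_dist_le hι hadj hu).antisymm
      (coordSupport_subset_of_forall_adj_dist_le hι hadj.symm hv)
  · rintro ⟨huv, hdisj | heq⟩
    · exact strongResolvingGraph_adj_of_dist_eq_two (ediam_gammaC_le_two hι)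
        (dist_gammaC_eq_two hι huv hdisj)
    · exact strongResolvingGraph_adj.2 ⟨huv, forall_adj_dist_le_of_coordSupport_eq huv heq,
        forall_adj_dist_le_of_coordSupport_eq (Ne.symm huv) heq.symm⟩

lemma isIndepSet_strongResolvingGraph_gammaC_iff [DecidableEq ι] (hι : 3 ≤ Fintype.card ι)
    {s : Finset (ZStarR (∀ i, F i))} :
    (GammaC (∀ i, F i)).strongResolvingGraph.IsIndepSet s ↔
      Set.InjOn (fun u : ZStarR (∀ i, F i) => coordSupport u.1) s ∧
        ((s.image fun u => coordSupport u.1 : Finset (Finset ι)) :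
          Set (Finset ι)).Intersecting := by
  simp only [isIndepSet_iff, Set.Pairwise, strongResolvingGraph_gammaC_adj_iff hι]
  constructor
  · intro h
    refine ⟨fun u hu v hv huv => by_contra fun hne => h hu hv hne ⟨hne, Or.inr huv⟩, ?_⟩
    rw [coe_image]
    rintro _ ⟨u, hu, rfl⟩ _ ⟨v, hv, rfl⟩ hdisj
    by_cases huv : u = v
    · subst huv
      exact u.coordSupport_nonempty.ne_empty (disjoint_self.1 hdisj)
    · exact h hu hv huv ⟨huv, Or.inl hdisj⟩
  · rintro ⟨hinj, hint⟩ u hu v hv huv ⟨-, hdisj | heq⟩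
    · exact hint (mem_image_of_mem _ hu) (mem_image_of_mem _ hv) hdisj
    · exact huv (hinj hu hv heq)

lemma exists_strongResolvingGraph_gammaC_adj (hι : 3 ≤ Fintype.card ι) :
    ∃ u v : ZStarR (∀ i, F i), (GammaC (∀ i, F i)).strongResolvingGraph.Adj u v := by
  classical
  obtain ⟨i⟩ : Nonempty ι := Fintype.card_pos_iff.1 (by omega)
  obtain ⟨u, -⟩ := ZStarR.exists_coordSupport_eq (F := F) (singleton_nonempty i)
    fun h => by
      have := card_singleton i
      rw [h, card_univ] at this
      omega
  obtain ⟨v, hv⟩ := ZStarR.exists_coordSupport_eq (F := F) (S := (coordSupport u.1)ᶜ)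
    (nonempty_iff_ne_empty.2 ((compl_eq_empty_iff _).not.2 u.coordSupport_ne_univ))
    ((compl_eq_univ_iff _).not.2 u.coordSupport_nonempty.ne_empty)
  have hdisj : Disjoint (coordSupport u.1) (coordSupport v.1) := hv ▸ disjoint_compl_right
  refine ⟨u, v, (strongResolvingGraph_gammaC_adj_iff hι).2 ⟨fun huv => ?_, Or.inl hdisj⟩⟩
  exact u.coordSupport_nonempty.ne_empty (disjoint_self.1 (huv ▸ hdisj))

lemma two_mul_card_add_one_le_of_isIndepSet [DecidableEq ι] (hι : 3 ≤ Fintype.card ι)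
    {s : Finset (ZStarR (∀ i, F i))}
    (hs : (GammaC (∀ i, F i)).strongResolvingGraph.IsIndepSet s) :
    2 * (#s + 1) ≤ 2 ^ Fintype.card ι := by
  have : Nonempty ι := Fintype.card_pos_iff.1 (by omega)
  obtain ⟨hinj, hint⟩ := (isIndepSet_strongResolvingGraph_gammaC_iff hι).1 hs
  have huniv : univ ∉ s.image fun u => coordSupport u.1 := by
    simp [ZStarR.coordSupport_ne_univ]
  have hint' : ((insert univ (s.image fun u => coordSupport u.1) : Finset (Finset ι)) :
      Set (Finset ι)).Intersecting := by
    rw [coe_insert]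
    refine hint.insert univ_nonempty.ne_empty fun t ht => ?_
    rw [← top_eq_univ, top_disjoint]
    exact hint.ne_bot ht
  simpa [card_insert_of_notMem huniv, card_image_of_injOn hinj] using hint'.card_le

lemma exists_isIndepSet_two_mul_card_add_one_eq [DecidableEq ι] (hι : 3 ≤ Fintype.card ι) :
    ∃ s : Finset (ZStarR (∀ i, F i)),
      (GammaC (∀ i, F i)).strongResolvingGraph.IsIndepSet s ∧
        2 * (#s + 1) = 2 ^ Fintype.card ι := by
  have : Nonempty ι := Fintype.card_pos_iff.1 (by omega)
  have huniv : (({univ} : Finset (Finset ι)) : Set (Finset ι)).Intersecting := by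
    rw [coe_singleton, Set.intersecting_singleton]
    exact univ_nonempty.ne_empty
  obtain ⟨𝒜, huniv𝒜, h𝒜card, h𝒜⟩ := huniv.exists_card_eq
  have hsurj : Set.SurjOn (fun u : ZStarR (∀ i, F i) => coordSupport u.1) Set.univ
      (𝒜.erase univ : Set (Finset ι)) := by
    intro S hS
    rw [coe_erase, Set.mem_sdiff, Set.mem_singleton_iff] at hS
    obtain ⟨u, hu⟩ := ZStarR.exists_coordSupport_eq (F := F)
      (nonempty_iff_ne_empty.2 (h𝒜.ne_bot hS.1)) hS.2
    exact ⟨u, Set.mem_univ u, hu⟩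
  obtain ⟨s, -, hinj, himage⟩ := exists_subset_injOn_image_eq_of_surjOn _ _ hsurj
  refine ⟨s, (isIndepSet_strongResolvingGraph_gammaC_iff hι).2
    ⟨hinj, himage ▸ h𝒜.mono (coe_subset.2 (erase_subset _ _))⟩, ?_⟩
  rw [← card_image_of_injOn hinj, himage, card_erase_add_one (huniv𝒜 (mem_singleton_self _)),
    h𝒜card, Fintype.card_finset]

theorem indepNum_strongResolvingGraph_gammaC [∀ i, Finite (F i)] (hι : 3 ≤ Fintype.card ι) :
    (GammaC (∀ i, F i)).strongResolvingGraph.indepNum = 2 ^ (Fintype.card ι - 1) - 1 := by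
  classical
  have hpow : 2 ^ Fintype.card ι = 2 * 2 ^ (Fintype.card ι - 1) := by
    rw [← pow_succ']
    congr 1
    omega
  apply le_antisymm
  · obtain ⟨s, hs⟩ := (GammaC (∀ i, F i)).strongResolvingGraph.exists_isNIndepSet_indepNum
    have := two_mul_card_add_one_le_of_isIndepSet hι hs.isIndepSet
    rw [hs.card_eq] at this
    omega
  · obtain ⟨s, hs, hcard⟩ := exists_isIndepSet_two_mul_card_add_one_eq (F := F) hι
    have := hs.card_le_indepNum
    omega

end ProductOfDomains

/-- for a product `R = F₁ × ⋯ × Fₙ` of finite fields with `n ≥ 3`,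
`sdim_M(Γ^c(R)) = |Z*(R)| - 2^(n-1) + 1`. -/
theorem sdim_gammac_product_of_fields (n : ℕ) (hn : 3 ≤ n)
    (F : Fin n → Type*) [∀ i, Field (F i)] [∀ i, Fintype (F i)] :
    sdim (GammaC (∀ i, F i)) = Nat.card (ZStarR (∀ i, F i)) - 2 ^ (n - 1) + 1 := by
  have hι : 3 ≤ Fintype.card (Fin n) := by rwa [Fintype.card_fin]
  obtain ⟨u, v, huv⟩ := exists_strongResolvingGraph_gammaC_adj (F := F) hι
  -- keeps the truncated subtraction `Nat.card _ - (2 ^ (n - 1) - 1)` honest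
  have hlt := SimpleGraph.indepNum_lt_card huv
  rw [SimpleGraph.sdim_eq_card_sub_indepNum (ediam_gammaC_le_two hι)]
  rw [indepNum_strongResolvingGraph_gammaC hι, Fintype.card_fin] at hlt ⊢
  have := Nat.one_le_two_pow (n := n - 1)
  omega
end

section
/- Let R be a finite commutative ring with identity having exactly n maximal ideals, where n ≥ 3. Let Γ be the maximal graph of R (equal to the complement Γ_2'(R)^c of the restricted comaximal graph): its vertices are the non-unit elements of R that do not lie in the Jacobson radical J(R) (the intersection of all maximal ideals), and distinct vertices x, y are adjacent iff x and y lie in a common maximal ideal of R. Then sdim_M(Γ) = |V(Γ)| − 2^{n−1} + 1, where |V(Γ)| is the number of non-units of R outside J(R). -/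
/-- Vertices of the maximal graph of `R`: non-units of `R` lying outside the Jacobson
radical, i.e. outside the intersection of all maximal ideals. -/
def MaxVert (R : Type*) [CommRing R] : Type _ :=
  {x : R // ¬ IsUnit x ∧ ∃ M : Ideal R, M.IsMaximal ∧ x ∉ M}

/-- The maximal graph of `R` (the complement `Γ₂'(R)^c` of the restricted comaximal
graph): distinct vertices are adjacent iff they lie in a common maximal ideal. -/
def MaxGraph (R : Type*) [CommRing R] : SimpleGraph (MaxVert R) where
  Adj x y := x ≠ y ∧ ∃ M : Ideal R, M.IsMaximal ∧ x.1 ∈ M ∧ y.1 ∈ M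
  symm := ⟨fun x y h => ⟨h.1.symm, h.2.imp fun M hM => ⟨hM.1, hM.2.2, hM.2.1⟩⟩⟩
  loopless := ⟨fun x h => h.1 rfl⟩

/-!
The set of maximal ideals containing a vertex, its *type*, can be any nonempty proper subset of
the `n` maximal ideals (Chinese remainder theorem), and two distinct vertices are at distance `1`
or `2` according to whether their types meet. Vertices of equal type are adjacent twins, and
vertices of disjoint types form a diametral pair; neither kind of pair is strongly resolved by a
third vertex. Hence `W` is a strong resolving set exactly when, outside `W`, types are distinct
and pairwise meeting. An intersecting family of subsets of an `n`-set avoiding the full set has at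
most `2 ^ (n - 1) - 1` members, and this bound is attained, which gives the minimal size of `W`.
-/

open SimpleGraph

section StrongResolving

variable {V : Type*} {G : SimpleGraph V} {u v w : V}

lemma stronglyResolves_left (G : SimpleGraph V) (u v : V) : StronglyResolves G u u v :=
  Or.inr (by rw [dist_self, add_zero])

lemma stronglyResolves_right (G : SimpleGraph V) (u v : V) : StronglyResolves G v u v :=
  Or.inl (by rw [dist_self, add_zero])

lemma StronglyResolves.symm (h : StronglyResolves G w u v) : StronglyResolves G w v u :=
  Or.symm h

lemma not_stronglyResolves_of_adj (huv : G.Adj u v) (h : G.dist u w = G.dist v w) :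
    ¬ StronglyResolves G w u v := by
  have h₁ := dist_eq_one_iff_adj.mpr huv
  have h₂ := dist_eq_one_iff_adj.mpr huv.symm
  unfold StronglyResolves
  omega

lemma not_stronglyResolves_of_forall_dist_le (hG : G.Connected)
    (hmax : ∀ x y, G.dist x y ≤ G.dist u v) (hwu : w ≠ u) (hwv : w ≠ v) :
    ¬ StronglyResolves G w u v := by
  have h₁ := hG.pos_dist_of_ne hwu.symm
  have h₂ := hG.pos_dist_of_ne hwv.symm
  have h₃ := hmax u w
  have h₄ := hmax v w
  unfold StronglyResolves
  rw [dist_comm (u := v) (v := u)]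
  omega

lemma IsStrongResolvingSet.nonempty [Nontrivial V] {W : Set V}
    (hW : IsStrongResolvingSet G W) : W.Nonempty := by
  obtain ⟨u, v, huv⟩ := exists_pair_ne V
  obtain ⟨w, hw, -⟩ := hW u v huv
  exact ⟨w, hw⟩

lemma sdim_eq_ncard [Finite V] {W : Set V} (hW : IsStrongResolvingSet G W)
    (hmin : ∀ W', IsStrongResolvingSet G W' → W.ncard ≤ W'.ncard) : sdim G = W.ncard := by
  have hmem : W.ncard ∈
      {k | ∃ W : Set V, W.Finite ∧ IsStrongResolvingSet G W ∧ Nat.card W = k} :=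
    ⟨W, W.toFinite, hW, Nat.card_coe_set_eq W⟩
  refine le_antisymm (Nat.sInf_le hmem) (le_csInf ⟨_, hmem⟩ ?_)
  rintro _ ⟨W', -, hW', rfl⟩
  rw [Nat.card_coe_set_eq]
  exact hmin W' hW'

end StrongResolving

section Intersecting

variable {α : Type*} [BooleanAlgebra α] [Nontrivial α] [Finite α]

lemma Set.Intersecting.two_mul_ncard_add_two_le {s : Set α} (hs : s.Intersecting)
    (htop : ⊤ ∉ s) : 2 * s.ncard + 2 ≤ Nat.card α := by
  classical
  cases nonempty_fintype α
  have hins : (insert ⊤ s).Intersecting :=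
    hs.insert top_ne_bot fun b hb h => hs.ne_bot hb (top_disjoint.mp h)
  have := Set.Intersecting.card_le (s := (insert ⊤ s).toFinset) (by simpa using hins)
  rw [← Set.ncard_eq_toFinset_card', Set.ncard_insert_of_notMem htop,
    ← Nat.card_eq_fintype_card] at this
  omega

lemma Set.exists_intersecting_two_mul_ncard_add_two_eq :
    ∃ s : Set α, s.Intersecting ∧ ⊤ ∉ s ∧ 2 * s.ncard + 2 = Nat.card α := by
  cases nonempty_fintype α
  obtain ⟨t, htop, hcard, ht⟩ := Set.Intersecting.exists_card_eq (s := ({⊤} : Finset α))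
    (by rw [Finset.coe_singleton, Set.intersecting_singleton]; exact top_ne_bot)
  refine ⟨t \ {⊤}, ht.mono Set.sdiff_subset, fun h => h.2 rfl, ?_⟩
  have := Set.ncard_sdiff_singleton_add_one (s := (t : Set α)) (a := ⊤)
    (by simpa using htop) t.finite_toSet
  rw [Set.ncard_coe_finset] at this
  rw [Nat.card_eq_fintype_card]
  omega

end Intersecting

section MaximalIdeals

abbrev MaxIdeal (R : Type*) [CommRing R] := {M : Ideal R // M.IsMaximal}

variable {R : Type*} [CommRing R]

lemma MaxIdeal.exists_forall_mem_iff_mem [Finite (MaxIdeal R)] (S : Set (MaxIdeal R)) :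
    ∃ x : R, ∀ M : MaxIdeal R, x ∈ M.1 ↔ M ∈ S := by
  classical
  have hcop : Pairwise fun M N : MaxIdeal R => IsCoprime M.1 N.1 := fun M N hMN =>
    have := M.2
    have := N.2
    Ideal.isCoprime_of_isMaximal (Subtype.coe_ne_coe.mpr hMN)
  obtain ⟨x, hx⟩ := Ideal.pi_quotient_surjective hcop fun M => if M ∈ S then 0 else 1
  refine ⟨x, fun M => ?_⟩
  have : Nontrivial (R ⧸ M.1) := Ideal.Quotient.nontrivial_iff.mpr M.2.ne_top
  rw [← Ideal.Quotient.eq_zero_iff_mem, hx M]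
  split_ifs with hM <;> simp [hM]

instance [Finite R] : Finite (MaxVert R) := Subtype.finite

def MaxVert.maxIdeals (v : MaxVert R) : Set (MaxIdeal R) := {M | v.1 ∈ M.1}

lemma MaxVert.maxIdeals_nonempty (v : MaxVert R) : v.maxIdeals.Nonempty := by
  obtain ⟨M, hM, hv⟩ := exists_max_ideal_of_mem_nonunits v.2.1
  exact ⟨⟨M, hM⟩, hv⟩

lemma MaxVert.maxIdeals_ne_univ (v : MaxVert R) : v.maxIdeals ≠ Set.univ := by
  obtain ⟨M, hM, hv⟩ := v.2.2
  exact Set.ne_univ_iff_exists_notMem _ |>.mpr ⟨⟨M, hM⟩, hv⟩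

lemma MaxVert.exists_maxIdeals_eq [Finite (MaxIdeal R)] {S : Set (MaxIdeal R)}
    (hS : S.Nonempty) (hS' : S ≠ Set.univ) : ∃ v : MaxVert R, v.maxIdeals = S := by
  obtain ⟨x, hx⟩ := MaxIdeal.exists_forall_mem_iff_mem S
  obtain ⟨M, hM⟩ := hS
  obtain ⟨N, hN⟩ := Set.ne_univ_iff_exists_notMem S |>.mp hS'
  refine ⟨⟨x, fun hu => M.2.ne_top (M.1.eq_top_of_isUnit_mem ((hx M).mpr hM) hu),
    N.1, N.2, fun h => hN ((hx N).mp h)⟩, Set.ext hx⟩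

lemma MaxVert.ne_of_disjoint {u v : MaxVert R} (h : Disjoint u.maxIdeals v.maxIdeals) :
    u ≠ v := by
  rintro rfl
  exact u.maxIdeals_nonempty.ne_empty (disjoint_self.mp h)

lemma MaxVert.nontrivial [Finite (MaxIdeal R)] (hn : 2 ≤ Nat.card (MaxIdeal R)) :
    Nontrivial (MaxVert R) := by
  have : Nontrivial (MaxIdeal R) := Finite.one_lt_card_iff_nontrivial.mp hn
  obtain ⟨M, N, hMN⟩ := exists_pair_ne (MaxIdeal R)
  have hne_univ {P Q : MaxIdeal R} (h : P ≠ Q) : ({P} : Set (MaxIdeal R)) ≠ Set.univ :=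
    Set.ne_univ_iff_exists_notMem _ |>.mpr ⟨Q, h.symm⟩
  obtain ⟨u, hu⟩ := MaxVert.exists_maxIdeals_eq (Set.singleton_nonempty M) (hne_univ hMN)
  obtain ⟨v, hv⟩ := MaxVert.exists_maxIdeals_eq (Set.singleton_nonempty N) (hne_univ hMN.symm)
  refine ⟨u, v, MaxVert.ne_of_disjoint ?_⟩
  rw [hu, hv, Set.disjoint_singleton]
  exact hMN

end MaximalIdeals

section MaxGraph

variable {R : Type*} [CommRing R] {u v w : MaxVert R}

lemma maxGraph_adj_iff :
    (MaxGraph R).Adj u v ↔ u ≠ v ∧ ¬ Disjoint u.maxIdeals v.maxIdeals := by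
  rw [Set.not_disjoint_iff]
  exact and_congr_right fun _ =>
    ⟨fun ⟨M, hM, hu, hv⟩ => ⟨⟨M, hM⟩, hu, hv⟩,
      fun ⟨M, hu, hv⟩ => ⟨M.1, M.2, hu, hv⟩⟩

lemma maxGraph_dist_eq_one (huv : u ≠ v) (h : ¬ Disjoint u.maxIdeals v.maxIdeals) :
    (MaxGraph R).dist u v = 1 :=
  dist_eq_one_iff_adj.mpr (maxGraph_adj_iff.mpr ⟨huv, h⟩)

variable [Finite (MaxIdeal R)]

lemma maxGraph_dist_eq_two (hn : 3 ≤ Nat.card (MaxIdeal R))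
    (h : Disjoint u.maxIdeals v.maxIdeals) :
    (MaxGraph R).dist u v = 2 := by
  obtain ⟨M, hM⟩ := u.maxIdeals_nonempty
  obtain ⟨N, hN⟩ := v.maxIdeals_nonempty
  have hMN : M ≠ N := fun hMN => Set.disjoint_left.mp h hM (hMN ▸ hN)
  have hpair : ({M, N} : Set (MaxIdeal R)) ≠ Set.univ := fun hpair => by
    have := congrArg Set.ncard hpair
    rw [Set.ncard_pair hMN, Set.ncard_univ] at this
    omega
  obtain ⟨w, hw⟩ := MaxVert.exists_maxIdeals_eq (Set.insert_nonempty M {N}) hpair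
  have hMw : M ∈ w.maxIdeals := hw ▸ Set.mem_insert M {N}
  have hNw : N ∈ w.maxIdeals := hw ▸ Set.mem_insert_of_mem M rfl
  have huw : (MaxGraph R).Adj u w := maxGraph_adj_iff.mpr
    ⟨fun huw => Set.disjoint_right.mp h hN (huw ▸ hNw),
      Set.not_disjoint_iff.mpr ⟨M, hM, hMw⟩⟩
  have hwv : (MaxGraph R).Adj w v := maxGraph_adj_iff.mpr
    ⟨fun hwv => Set.disjoint_left.mp h hM (hwv ▸ hMw),
      Set.not_disjoint_iff.mpr ⟨N, hNw, hN⟩⟩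
  have hle : (MaxGraph R).dist u v ≤ 2 := dist_le (huw.toWalk.append hwv.toWalk)
  have hreach : (MaxGraph R).Reachable u v := huw.reachable.trans hwv.reachable
  have hpos := hreach.pos_dist_of_ne (MaxVert.ne_of_disjoint h)
  have hne_one : (MaxGraph R).dist u v ≠ 1 := fun h₁ =>
    (maxGraph_adj_iff.mp (dist_eq_one_iff_adj.mp h₁)).2 h
  omega

lemma maxGraph_dist_le_two (hn : 3 ≤ Nat.card (MaxIdeal R)) (u v : MaxVert R) :
    (MaxGraph R).dist u v ≤ 2 := by
  by_cases huv : u = v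
  · simp [huv]
  by_cases h : Disjoint u.maxIdeals v.maxIdeals
  · exact (maxGraph_dist_eq_two hn h).le
  · exact (maxGraph_dist_eq_one huv h).trans_le one_le_two

lemma maxGraph_connected (hn : 3 ≤ Nat.card (MaxIdeal R)) : (MaxGraph R).Connected := by
  have := MaxVert.nontrivial (R := R) (by omega)
  refine ⟨fun u v => ?_⟩
  by_cases huv : u = v
  · exact huv ▸ Reachable.refl u
  by_cases h : Disjoint u.maxIdeals v.maxIdeals
  · exact Reachable.of_dist_ne_zero (by rw [maxGraph_dist_eq_two hn h]; omega)
  · exact (maxGraph_adj_iff.mpr ⟨huv, h⟩).reachable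

lemma maxGraph_dist_eq_of_maxIdeals_eq (hn : 3 ≤ Nat.card (MaxIdeal R))
    (h : u.maxIdeals = v.maxIdeals) (hwu : w ≠ u)
    (hwv : w ≠ v) : (MaxGraph R).dist u w = (MaxGraph R).dist v w := by
  by_cases hd : Disjoint u.maxIdeals w.maxIdeals
  · rw [maxGraph_dist_eq_two hn hd, maxGraph_dist_eq_two hn (h ▸ hd)]
  · rw [maxGraph_dist_eq_one hwu.symm hd, maxGraph_dist_eq_one hwv.symm (h ▸ hd)]

end MaxGraph

section StrongResolvingMaxGraph

variable {R : Type*} [CommRing R] [Finite (MaxIdeal R)] {W : Set (MaxVert R)}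

lemma IsStrongResolvingSet.injOn_maxIdeals_compl (hn : 3 ≤ Nat.card (MaxIdeal R))
    (hW : IsStrongResolvingSet (MaxGraph R) W) : Set.InjOn MaxVert.maxIdeals Wᶜ := by
  intro u hu v hv huv
  by_contra hne
  obtain ⟨w, hwW, hres⟩ := hW u v hne
  have hadj : (MaxGraph R).Adj u v := maxGraph_adj_iff.mpr
    ⟨hne, fun h => u.maxIdeals_nonempty.ne_empty (disjoint_self.mp (huv ▸ h))⟩
  exact not_stronglyResolves_of_adj hadj (maxGraph_dist_eq_of_maxIdeals_eq hn huv
    (ne_of_mem_of_not_mem hwW hu) (ne_of_mem_of_not_mem hwW hv)) hres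

lemma IsStrongResolvingSet.intersecting_maxIdeals_compl (hn : 3 ≤ Nat.card (MaxIdeal R))
    (hW : IsStrongResolvingSet (MaxGraph R) W) : (MaxVert.maxIdeals '' Wᶜ).Intersecting := by
  rintro _ ⟨u, hu, rfl⟩ _ ⟨v, hv, rfl⟩ h
  obtain ⟨w, hwW, hres⟩ := hW u v (MaxVert.ne_of_disjoint h)
  refine not_stronglyResolves_of_forall_dist_le (maxGraph_connected hn) (fun x y => ?_)
    (ne_of_mem_of_not_mem hwW hu) (ne_of_mem_of_not_mem hwW hv) hres
  rw [maxGraph_dist_eq_two hn h]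
  exact maxGraph_dist_le_two hn x y

lemma exists_stronglyResolves_of_not_subset (hn : 3 ≤ Nat.card (MaxIdeal R))
    (hint : (MaxVert.maxIdeals '' Wᶜ).Intersecting) {u v : MaxVert R} (hu : u ∉ W)
    (hv : v ∉ W) (hvu : ¬ v.maxIdeals ⊆ u.maxIdeals) :
    ∃ w ∈ W, StronglyResolves (MaxGraph R) w u v := by
  obtain ⟨M, hMv, hMu⟩ := Set.not_subset.mp hvu
  obtain ⟨w, hw⟩ := MaxVert.exists_maxIdeals_eq (Set.nonempty_compl.mpr u.maxIdeals_ne_univ)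
    (Set.compl_ne_univ.mpr u.maxIdeals_nonempty)
  have huw : Disjoint u.maxIdeals w.maxIdeals := hw ▸ disjoint_compl_right
  have hwW : w ∈ W := by
    by_contra hwW
    exact hint ⟨u, hu, rfl⟩ ⟨w, hwW, rfl⟩ huw
  have hdist_uw := maxGraph_dist_eq_two hn huw
  have hdist_vw := maxGraph_dist_eq_one (ne_of_mem_of_not_mem hwW hv).symm
    (Set.not_disjoint_iff.mpr ⟨M, hMv, hw ▸ hMu⟩)
  have hdist_uv := maxGraph_dist_eq_one (fun huv => hMu (by rwa [huv]))
    (hint ⟨u, hu, rfl⟩ ⟨v, hv, rfl⟩)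
  exact ⟨w, hwW, Or.inl (by rw [hdist_uw, hdist_vw, hdist_uv])⟩

theorem isStrongResolvingSet_maxGraph_iff (hn : 3 ≤ Nat.card (MaxIdeal R)) :
    IsStrongResolvingSet (MaxGraph R) W ↔
      Set.InjOn MaxVert.maxIdeals Wᶜ ∧ (MaxVert.maxIdeals '' Wᶜ).Intersecting := by
  refine ⟨fun hW => ⟨hW.injOn_maxIdeals_compl hn, hW.intersecting_maxIdeals_compl hn⟩, ?_⟩
  rintro ⟨hinj, hint⟩ u v huv
  by_cases hu : u ∈ W
  · exact ⟨u, hu, stronglyResolves_left _ u v⟩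
  by_cases hv : v ∈ W
  · exact ⟨v, hv, stronglyResolves_right _ u v⟩
  by_cases hvu : v.maxIdeals ⊆ u.maxIdeals
  · have huv' : ¬ u.maxIdeals ⊆ v.maxIdeals := fun huv' => huv (hinj hu hv (huv'.antisymm hvu))
    obtain ⟨w, hwW, hres⟩ := exists_stronglyResolves_of_not_subset hn hint hv hu huv'
    exact ⟨w, hwW, hres.symm⟩
  · exact exists_stronglyResolves_of_not_subset hn hint hu hv hvu

lemma IsStrongResolvingSet.two_mul_ncard_compl_add_two_le (hn : 3 ≤ Nat.card (MaxIdeal R))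
    (hW : IsStrongResolvingSet (MaxGraph R) W) :
    2 * Wᶜ.ncard + 2 ≤ Nat.card (Set (MaxIdeal R)) := by
  have : Nonempty (MaxIdeal R) := Finite.card_pos_iff.mp (by omega)
  rw [← (hW.injOn_maxIdeals_compl hn).ncard_image]
  refine (hW.intersecting_maxIdeals_compl hn).two_mul_ncard_add_two_le ?_
  rintro ⟨v, -, hv⟩
  exact v.maxIdeals_ne_univ hv

lemma exists_isStrongResolvingSet_two_mul_ncard_compl_add_two_eq
    (hn : 3 ≤ Nat.card (MaxIdeal R)) : ∃ W : Set (MaxVert R),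
      IsStrongResolvingSet (MaxGraph R) W ∧ 2 * Wᶜ.ncard + 2 = Nat.card (Set (MaxIdeal R)) := by
  have : Nonempty (MaxIdeal R) := Finite.card_pos_iff.mp (by omega)
  obtain ⟨𝒜, h𝒜, htop, hcard⟩ :=
    Set.exists_intersecting_two_mul_ncard_add_two_eq (α := Set (MaxIdeal R))
  have hrep (S : 𝒜) : ∃ v : MaxVert R, v.maxIdeals = S :=
    MaxVert.exists_maxIdeals_eq (Set.nonempty_iff_ne_empty.mpr (h𝒜.ne_bot S.2))
      fun h => htop (by rw [Set.top_eq_univ, ← h]; exact S.2)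
  choose rep hrep using hrep
  have hinj : Function.Injective rep := fun S T h => Subtype.ext (by rw [← hrep, ← hrep, h])
  refine ⟨(Set.range rep)ᶜ, (isStrongResolvingSet_maxGraph_iff hn).mpr ⟨?_, ?_⟩, ?_⟩
  · rw [compl_compl]
    rintro _ ⟨S, rfl⟩ _ ⟨T, rfl⟩ h
    rw [hinj.eq_iff, ← Subtype.ext_iff.symm]
    rwa [hrep, hrep] at h
  · rw [compl_compl, ← Set.range_comp]
    exact h𝒜.mono (Set.range_subset_iff.mpr fun S => by simp [hrep])
  · rw [compl_compl, Set.ncard_range_of_injective hinj, Nat.card_coe_set_eq, hcard]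

end StrongResolvingMaxGraph

/-- for a finite commutative ring `R` with exactly `n ≥ 3` maximal ideals,
the strong metric dimension of the maximal graph of `R` equals `|V(Γ)| - 2^(n-1) + 1`. -/
theorem sdim_maximal_graph (R : Type*) [CommRing R] [Finite R]
    (n : ℕ) (hn : 3 ≤ n) (hmax : Nat.card {M : Ideal R // M.IsMaximal} = n) :
    sdim (MaxGraph R) = Nat.card (MaxVert R) - 2 ^ (n - 1) + 1 := by
  have hn' : 3 ≤ Nat.card (MaxIdeal R) := hmax ▸ hn
  have hsets : Nat.card (Set (MaxIdeal R)) = 2 * 2 ^ (n - 1) := by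
    cases nonempty_fintype (MaxIdeal R)
    rw [Nat.card_eq_fintype_card, Fintype.card_set, ← Nat.card_eq_fintype_card, hmax,
      ← pow_succ', Nat.sub_add_cancel (by omega)]
  have := MaxVert.nontrivial (R := R) (by omega)
  obtain ⟨W, hW, hWc⟩ := exists_isStrongResolvingSet_two_mul_ncard_compl_add_two_eq hn'
  have hW_pos := hW.nonempty.ncard_pos
  have hW_split := W.ncard_add_ncard_compl
  rw [sdim_eq_ncard hW fun W' hW' => ?_]
  · omega
  · have := hW'.two_mul_ncard_compl_add_two_le hn'
    have := W'.ncard_add_ncard_compl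
    omega
end
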